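/- Let A, B ⊆ [m] with A ⊄ B and B ⊄ A, Δ = Δ_A ∪ Δ_B, D = Δ + wΔ ⊆ F_4^m, N = 2^{|A|} + 2^{|B|} − 2^{|A∩B|}, n = N² − 1, and let C = C^{(2)}_{D^*} be the binary subfield code of C_{D^*}. Then the dual code C^⊥ = {y ∈ F_2^n : Σ_i y_i c_i = 0 for all c ∈ C} has dimension n − 2|A∪B| and minimum distance exactly 3; moreover 1 + n + n(n−1)/2 > 4^{|A∪B|}, so by the Sphere Packing bound there is no binary linear code of length n, dimension n − 2|A∪B|, and minimum distance 5 (hence C^⊥, of parameters [n, n − 2|A∪B|, 3], is almost optimal: a [n, n − 2|A∪B|, 4] code would be distance-optimal). -/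
import Mathlib


open Finset

/-- The support of a binary vector, as a finset of coordinates. -/
def supp {m : ℕ} (v : Fin m → ZMod 2) : Finset (Fin m) :=
  Finset.univ.filter (fun i => v i ≠ 0)

/-- The inner product of two binary vectors. -/
def dot2 {m : ℕ} (u v : Fin m → ZMod 2) : ZMod 2 := ∑ i, u i * v i

/-- The simplicial complex generated by `A`: all binary vectors with support contained in `A`. -/
def delta {m : ℕ} (A : Finset (Fin m)) : Finset (Fin m → ZMod 2) :=
  Finset.univ.filter (fun v => supp v ⊆ A)

variable {F : Type} [Field F] [Fintype F] [DecidableEq F]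

/-- The embedding of `F_2 = {0,1}` into a field `F`. -/
def e2 (a : ZMod 2) : F := (a.val : F)

/-- The quaternary vector `d_1 + w·d_2` attached to a pair of binary vectors. -/
def dvec {m : ℕ} (w : F) (p : (Fin m → ZMod 2) × (Fin m → ZMod 2)) : Fin m → F :=
  fun i => e2 (p.1 i) + w * e2 (p.2 i)

/-- The codeword `c^{(2)}_D(α,β) = (α·d_2 + β·(d_1+d_2))_{d = d_1+w·d_2 ∈ D}` of the binary
subfield code, where `π₁, π₂` extract the components of the unique representation
`g = π₁(g) + w·π₂(g)`. -/
def cw2F {m : ℕ} (D : Finset (Fin m → F)) (π₁ π₂ : F → ZMod 2)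
    (α β : Fin m → ZMod 2) : {d // d ∈ D} → ZMod 2 :=
  fun d => dot2 α (fun i => π₂ (d.1 i)) + dot2 β (fun i => π₁ (d.1 i) + π₂ (d.1 i))

/-- The Hamming weight of the codeword `c^{(2)}_D(α,β)`, counted over the index set `D`. -/
def wt2F {m : ℕ} (D : Finset (Fin m → F)) (π₁ π₂ : F → ZMod 2)
    (α β : Fin m → ZMod 2) : ℕ :=
  (D.filter (fun d =>
    dot2 α (fun i => π₂ (d i)) + dot2 β (fun i => π₁ (d i) + π₂ (d i)) ≠ 0)).card

section Aux
set_option linter.unusedSectionVars false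

lemma e2_zero : (e2 0 : F) = 0 := by rw [e2]; norm_num
lemma e2_one : (e2 1 : F) = 1 := by rw [e2, ZMod.val_one]; norm_num
lemma zmod2_cases (x : ZMod 2) : x = 0 ∨ x = 1 := by revert x; decide
lemma zmod2_add_self_eq_zero : ∀ x y : ZMod 2, x + y = 0 → x = y := by decide

section Field4
variable (hF : Fintype.card F = 4) (w : F) (hw : w ^ 2 + w + 1 = 0)

include hF in
lemma two_eq_zero : (2 : F) = 0 := by
  have h4 : ((4 : ℕ) : F) = 0 := by rw [← hF]; exact Nat.cast_card_eq_zero F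
  have : (2 : F) * 2 = 0 := by push_cast at h4; linear_combination h4
  exact mul_self_eq_zero.mp this

include hw in
lemma w_ne_zero : w ≠ 0 := by intro h; rw [h] at hw; norm_num at hw

include hF hw in
lemma w_ne_one : w ≠ 1 := by
  intro h
  rw [h] at hw
  have h2 := two_eq_zero hF
  have h1 : (1 : F) = 0 := by linear_combination hw - h2
  exact one_ne_zero h1

include hF in
lemma e2_add (x y : ZMod 2) : (e2 (x + y) : F) = e2 x + e2 y := by
  have h2 := two_eq_zero hF
  rcases zmod2_cases x with rfl | rfl <;> rcases zmod2_cases y with rfl | rfl <;>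
    simp only [e2_zero, e2_one, add_zero, zero_add] <;>
    first
      | rfl
      | (rw [show (1:ZMod 2) + 1 = 0 by decide, e2_zero]; linear_combination -h2)

include hF hw in
lemma rep_zero (a b : ZMod 2) (h : (e2 a : F) + w * e2 b = 0) : a = 0 ∧ b = 0 := by
  have h2 := two_eq_zero hF
  have hw0 := w_ne_zero w hw
  have hw1 := w_ne_one hF w hw
  rcases zmod2_cases a with rfl | rfl <;> rcases zmod2_cases b with rfl | rfl <;>
    simp only [e2_zero, e2_one, mul_zero, mul_one, add_zero, zero_add] at h
  · exact ⟨rfl, rfl⟩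
  · exact absurd h hw0
  · exact absurd h one_ne_zero
  · exact absurd (by linear_combination h - h2 : w = 1) hw1

include hF hw in
lemma uniq_rep (a b a' b' : ZMod 2)
    (h : (e2 a : F) + w * e2 b = e2 a' + w * e2 b') : a = a' ∧ b = b' := by
  have h2 := two_eq_zero hF
  have key : (e2 (a + a') : F) + w * e2 (b + b') = 0 := by
    rw [e2_add hF, e2_add hF]
    linear_combination h + ((e2 a' : F) + w * e2 b') * h2
  have h3 := rep_zero hF w hw _ _ key
  exact ⟨zmod2_add_self_eq_zero _ _ h3.1, zmod2_add_self_eq_zero _ _ h3.2⟩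

include hF hw in
lemma dvec_inj {m : ℕ} : Function.Injective (dvec w : _ → Fin m → F) := by
  rintro ⟨a, b⟩ ⟨a', b'⟩ h
  have h' : ∀ i, e2 (a i) + w * e2 (b i) = (e2 (a' i) : F) + w * e2 (b' i) :=
    fun i => congrFun h i
  have hab : ∀ i, a i = a' i ∧ b i = b' i := fun i => uniq_rep hF w hw _ _ _ _ (h' i)
  simp only [Prod.mk.injEq]
  exact ⟨funext fun i => (hab i).1, funext fun i => (hab i).2⟩

end Field4

lemma mem_delta {m : ℕ} {A : Finset (Fin m)} {v : Fin m → ZMod 2} :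
    v ∈ delta A ↔ ∀ i ∉ A, v i = 0 := by
  simp only [delta, mem_filter, mem_univ, true_and, supp, Finset.subset_iff, mem_filter,
    mem_univ, true_and]
  constructor
  · intro h i hi
    by_contra h0
    exact hi (h h0)
  · intro h i hv
    by_contra hi
    exact hv (h i hi)

def deltaEquiv {m : ℕ} (A : Finset (Fin m)) :
    {v // v ∈ delta A} ≃ ({i // i ∈ A} → ZMod 2) where
  toFun v := fun i => v.1 i.1
  invFun f := ⟨fun j => if h : j ∈ A then f ⟨j, h⟩ else 0, by
    rw [mem_delta]; intro i hi; simp [hi]⟩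
  left_inv := by
    rintro ⟨v, hv⟩
    ext j
    by_cases hj : j ∈ A
    · simp [hj]
    · simp [hj, (mem_delta.mp hv) j hj]
  right_inv := by
    intro f
    funext ⟨j, hj⟩
    simp [hj]

lemma card_delta {m : ℕ} (A : Finset (Fin m)) : (delta A).card = 2 ^ A.card := by
  classical
  rw [← Fintype.card_coe (delta A), Fintype.card_congr (deltaEquiv A), Fintype.card_fun,
    Fintype.card_coe]
  norm_num

lemma delta_inter {m : ℕ} (A B : Finset (Fin m)) :
    delta A ∩ delta B = delta (A ∩ B) := by
  ext v
  simp only [Finset.mem_inter, mem_delta, Finset.mem_inter]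
  constructor
  · rintro ⟨h1, h2⟩ i hi
    by_cases hA : i ∈ A
    · exact h2 i (fun hB => hi ⟨hA, hB⟩)
    · exact h1 i hA
  · intro h
    constructor <;> intro i hi <;> exact h i (by tauto)

lemma card_delta_union {m : ℕ} (A B : Finset (Fin m)) :
    (delta A ∪ delta B).card + 2 ^ (A ∩ B).card = 2 ^ A.card + 2 ^ B.card := by
  have h := Finset.card_union_add_card_inter (delta A) (delta B)
  rw [delta_inter, card_delta, card_delta, card_delta] at h
  exact h

-- arithmetic
lemma two_mul_le_two_pow (u : ℕ) : 2 * u ≤ 2 ^ u := by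
  induction u with
  | zero => simp
  | succ k ih =>
    rcases Nat.eq_zero_or_pos k with hk | hk
    · subst hk; norm_num
    · have h1 : 2 ≤ 2 ^ k := by
        calc 2 = 2 * 1 := by ring
        _ ≤ 2 * k := by omega
        _ ≤ 2 ^ k := ih
      calc 2 * (k + 1) = 2 * k + 2 := by ring
      _ ≤ 2 ^ k + 2 ^ k := by omega
      _ = 2 ^ (k + 1) := by ring

lemma arith_core (p q r s n0 : ℕ) (hp2 : 2 ≤ p) (hq2 : 2 ≤ q) (hr1 : 1 ≤ r)
    (hs : p + q = s + 1) (hn : n0 + 9 = (r * s) ^ 2) :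
    2 * ((p * q * r) ^ 2) < 2 + 2 * (n0 + 8) + (n0 + 8) * (n0 + 7) := by
  have hpZ : (2:ℤ) ≤ p := by exact_mod_cast hp2
  have hqZ : (2:ℤ) ≤ q := by exact_mod_cast hq2
  have hrZ : (1:ℤ) ≤ r := by exact_mod_cast hr1
  have hpqZ : (p:ℤ) + q = s + 1 := by exact_mod_cast hs
  have hsZ : (3:ℤ) ≤ s := by linarith
  have hnZ : (n0 : ℤ) + 9 = ((r:ℤ) * s) ^ 2 := by exact_mod_cast hn
  zify
  have hrhs : 2 + 2 * ((n0:ℤ) + 8) + ((n0:ℤ) + 8) * ((n0:ℤ) + 7)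
      = ((r:ℤ)*s)^2 * ((r:ℤ)*s)^2 - ((r:ℤ)*s)^2 + 2 := by
    linear_combination ((((r:ℤ)*s)^2 + n0 + 8)) * hnZ
  rw [hrhs]
  have h4pq : 4 * (p:ℤ) * q ≤ ((s:ℤ) + 1) ^ 2 := by nlinarith [sq_nonneg ((p:ℤ) - q)]
  have h16 : 16 * ((p:ℤ) * q) ^ 2 ≤ ((s:ℤ) + 1) ^ 4 := by
    nlinarith [mul_pos (by linarith : (0:ℤ) < p) (by linarith : (0:ℤ) < q)]
  have hs4 : 2 * ((s:ℤ) + 1) ^ 4 + 16 * (s:ℤ) ^ 2 < 16 * (s:ℤ) ^ 4 := by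
    nlinarith [hsZ, sq_nonneg ((s:ℤ) - 3)]
  have hr24 : (r:ℤ) ^ 2 ≤ (r:ℤ) ^ 4 := by
    nlinarith [mul_nonneg (sq_nonneg (r:ℤ)) (by nlinarith : (0:ℤ) ≤ (r:ℤ)^2 - 1)]
  nlinarith [mul_le_mul_of_nonneg_right h16 (by positivity : (0:ℤ) ≤ (r:ℤ)^2),
    mul_lt_mul_of_pos_right hs4 (by positivity : (0:ℤ) < (r:ℤ)^2),
    mul_le_mul_of_nonneg_right hr24 (by positivity : (0:ℤ) ≤ (s:ℤ)^4)]

lemma arith_key (a b c u n : ℕ) (hca : c < a) (hcb : c < b) (huc : u + c = a + b)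
    (hn : n + 1 = (2 ^ a + 2 ^ b - 2 ^ c) ^ 2) :
    2 * u ≤ n ∧ 4 ^ u < 1 + n + n * (n - 1) / 2 := by
  obtain ⟨p, hp2, hap⟩ : ∃ p, 2 ≤ p ∧ 2 ^ a = p * 2 ^ c := by
    refine ⟨2 ^ (a - c), ?_, ?_⟩
    · calc 2 = 2 ^ 1 := by norm_num
      _ ≤ 2 ^ (a - c) := Nat.pow_le_pow_right (by norm_num) (by omega)
    · rw [← pow_add]; congr 1; omega
  obtain ⟨q, hq2, hbq⟩ : ∃ q, 2 ≤ q ∧ 2 ^ b = q * 2 ^ c := by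
    refine ⟨2 ^ (b - c), ?_, ?_⟩
    · calc 2 = 2 ^ 1 := by norm_num
      _ ≤ 2 ^ (b - c) := Nat.pow_le_pow_right (by norm_num) (by omega)
    · rw [← pow_add]; congr 1; omega
  obtain ⟨r, hr1, hrc⟩ : ∃ r, 1 ≤ r ∧ 2 ^ c = r := ⟨2 ^ c, Nat.one_le_two_pow, rfl⟩
  rw [hrc] at hap hbq
  have hu2 : 2 ^ u = p * q * r := by
    have h1 : 2 ^ u * r = (p * q * r) * r := by
      have h0 : 2 ^ u * 2 ^ c = 2 ^ a * 2 ^ b := by rw [← pow_add, ← pow_add, huc]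
      rw [hrc, hap, hbq] at h0
      calc 2 ^ u * r = p * r * (q * r) := h0
      _ = p * q * r * r := by ring
    exact Nat.eq_of_mul_eq_mul_right (by omega) h1
  obtain ⟨s, hs⟩ : ∃ s, p + q = s + 1 := ⟨p + q - 1, by omega⟩
  have hs3 : 3 ≤ s := by omega
  have hN : 2 ^ a + 2 ^ b - 2 ^ c = r * s := by
    have h2 : p * r + q * r = r * s + r := by
      calc p * r + q * r = (p + q) * r := by ring
      _ = (s + 1) * r := by rw [hs]
      _ = r * s + r := by ring
    rw [hap, hbq, hrc]; omega
  rw [hN] at hn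
  clear hap hbq hrc hN huc hca hcb
  have hpqs : p * q + 1 ≤ s ^ 2 := by
    have h7 : (p:ℤ) * q + 1 ≤ (s:ℤ) ^ 2 := by
      have hpq : (p:ℤ) + q = s + 1 := by exact_mod_cast hs
      nlinarith [sq_nonneg ((p:ℤ) - q), (by exact_mod_cast hp2 : (2:ℤ) ≤ p),
        (by exact_mod_cast hq2 : (2:ℤ) ≤ q)]
    exact_mod_cast h7
  have h2un : 2 ^ u ≤ n := by
    have c0 : (p * q + 1) * r = p * q * r + r := by ring
    have c1 : (p * q + 1) * r ≤ s ^ 2 * r := Nat.mul_le_mul_right r hpqs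
    have c2 : s ^ 2 * r ≤ (r * s) ^ 2 := by
      have e1 : s ^ 2 * r = 1 * (r * s ^ 2) := by ring
      have e2 : (r * s) ^ 2 = r * (r * s ^ 2) := by ring
      rw [e1, e2]
      exact Nat.mul_le_mul_right _ hr1
    rw [hu2]
    have h6 : p * q * r + r ≤ (r * s) ^ 2 := by rw [← c0]; exact le_trans c1 c2
    linarith
  refine ⟨le_trans (two_mul_le_two_pow u) h2un, ?_⟩
  have hn9 : 9 ≤ n + 1 := by
    rw [hn]
    calc 9 = (1 * 3) ^ 2 := by norm_num
    _ ≤ (r * s) ^ 2 := Nat.pow_le_pow_left (Nat.mul_le_mul hr1 hs3) 2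
  obtain ⟨n0, hn0⟩ : ∃ n0, n = n0 + 8 := ⟨n - 8, by omega⟩
  subst hn0
  obtain ⟨k, hk⟩ : ∃ k, (n0 + 8) * (n0 + 7) = 2 * k := by
    have h3 : Even ((n0 + 7) * (n0 + 8)) := Nat.even_mul_succ_self (n0 + 7)
    rcases h3 with ⟨k, hk⟩
    rw [Nat.mul_comm] at hk
    exact ⟨k, by omega⟩
  have e1 : n0 + 8 - 1 = n0 + 7 := by omega
  rw [e1, hk, Nat.mul_div_cancel_left k (by norm_num : 0 < 2)]
  have h4u : 4 ^ u = (p * q * r) ^ 2 := by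
    have h5 : (4:ℕ) ^ u = 2 ^ u * 2 ^ u := by
      rw [show (4:ℕ) = 2 * 2 from rfl, Nat.mul_pow]
    rw [h5, hu2, ← pow_two]
  suffices h : 2 * 4 ^ u < 2 + 2 * (n0 + 8) + (n0 + 8) * (n0 + 7) by linarith
  rw [h4u]
  exact arith_core p q r s n0 hp2 hq2 hr1 hs (by omega)

-- sphere packing
def chi {n : ℕ} (S : Finset (Fin n)) : Fin n → ZMod 2 := fun j => if j ∈ S then 1 else 0

lemma sphere_packing (n u : ℕ) (h2u : 2 * u ≤ n)
    (hlt : 4 ^ u < 1 + n + n * (n - 1) / 2) :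
    ¬ ∃ C : Submodule (ZMod 2) (Fin n → ZMod 2),
        Nat.card C = 2 ^ (n - 2 * u)
        ∧ (∀ y ∈ C, y ≠ 0 → 5 ≤ (Finset.univ.filter (fun i => y i ≠ 0)).card)
        ∧ (∃ y ∈ C, y ≠ 0 ∧ (Finset.univ.filter (fun i => y i ≠ 0)).card = 5) := by
  rintro ⟨C, hcard, hmin, -⟩
  classical
  set T := {S : Finset (Fin n) // S.card ≤ 2}
  have hinj : Function.Injective (fun p : C × T => (p.1 : Fin n → ZMod 2) + chi p.2.1) := by
    rintro ⟨⟨c, hc⟩, ⟨S, hS⟩⟩ ⟨⟨c', hc'⟩, ⟨S', hS'⟩⟩ h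
    simp only at h
    have hdiff : c - c' = chi S' - chi S := by
      have h9 := h
      abel_nf at h9 ⊢
      linear_combination (norm := abel_nf) h9
    have hcc : c = c' := by
      by_contra hne
      have hmem : c - c' ∈ C := sub_mem hc hc'
      have hne0 : c - c' ≠ 0 := sub_ne_zero_of_ne hne
      have h5 := hmin _ hmem hne0
      have hsub : (Finset.univ.filter (fun i => (c - c') i ≠ 0)) ⊆ S ∪ S' := by
        intro i hi
        simp only [mem_filter, mem_univ, true_and] at hi
        by_contra hiS
        simp only [mem_union, not_or] at hiS
        apply hi
        rw [hdiff]
        simp [chi, hiS.1, hiS.2]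
      have h8 : (Finset.univ.filter (fun i => (c - c') i ≠ 0)).card ≤ 4 := by
        calc _ ≤ (S ∪ S').card := Finset.card_le_card hsub
        _ ≤ S.card + S'.card := Finset.card_union_le S S'
        _ ≤ 4 := by omega
      omega
    subst hcc
    have hSS : chi S = chi S' := by
      have h7 : chi S' - chi S = 0 := by rw [← hdiff]; simp
      exact (sub_eq_zero.mp h7).symm
    have hS2 : S = S' := by
      ext j
      have h6 := congrFun hSS j
      simp only [chi] at h6
      by_cases hj : j ∈ S <;> by_cases hj' : j ∈ S' <;> simp [hj, hj'] at h6 ⊢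
    simp [hS2]
  have hcardT : Nat.card T = 1 + n + n * (n - 1) / 2 := by
    have h5 : Nat.card T = Fintype.card T := Nat.card_eq_fintype_card
    rw [h5]
    rw [Fintype.card_subtype]
    have hsplit : (univ.filter (fun S : Finset (Fin n) => S.card ≤ 2))
        = univ.filter (fun S : Finset (Fin n) => S.card = 0)
          ∪ (univ.filter (fun S : Finset (Fin n) => S.card = 1)
          ∪ univ.filter (fun S : Finset (Fin n) => S.card = 2)) := by
      ext S; simp only [mem_filter, mem_union, mem_univ, true_and]; omega
    rw [hsplit]
    have hf : ∀ k : ℕ, (univ.filter (fun S : Finset (Fin n) => S.card = k)).card = n.choose k := by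
      intro k
      have h4 : univ.filter (fun S : Finset (Fin n) => S.card = k) = Finset.powersetCard k univ := by
        rw [Finset.powersetCard_eq_filter, Finset.powerset_univ]
      rw [h4, Finset.card_powersetCard, Finset.card_univ, Fintype.card_fin]
    rw [Finset.card_union_of_disjoint, Finset.card_union_of_disjoint]
    · rw [hf 0, hf 1, hf 2, Nat.choose_zero_right, Nat.choose_one_right, Nat.choose_two_right]
      omega
    · simp only [Finset.disjoint_filter]
      intro S _ h1; omega
    · simp only [Finset.disjoint_left, mem_union, mem_filter, mem_univ, true_and]
      intro S h0 h12; omega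
  have hle : Nat.card C * Nat.card T ≤ 2 ^ n := by
    have h1 : Nat.card (C × T) ≤ Nat.card (Fin n → ZMod 2) := Nat.card_le_card_of_injective _ hinj
    rw [Nat.card_prod] at h1
    have h2 : Nat.card (Fin n → ZMod 2) = 2 ^ n := by
      rw [Nat.card_eq_fintype_card]
      simp [ZMod.card]
    omega
  rw [hcard, hcardT] at hle
  have hgt : 2 ^ n < 2 ^ (n - 2 * u) * (1 + n + n * (n - 1) / 2) := by
    calc 2 ^ n = 2 ^ (n - 2 * u) * 2 ^ (2 * u) := by rw [← pow_add]; congr 1; omega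
    _ = 2 ^ (n - 2 * u) * 4 ^ u := by
      congr 1
      rw [show (4:ℕ) = 2^2 from rfl, ← pow_mul]
    _ < _ := Nat.mul_lt_mul_of_pos_left hlt (by positivity)
  omega

-- dot2 lemmas
lemma dot2_single {m : ℕ} (i : Fin m) (v : Fin m → ZMod 2) :
    dot2 (Pi.single i 1) v = v i := by
  unfold dot2
  rw [Finset.sum_eq_single i]
  · simp
  · intro j _ hj
    simp [Pi.single_apply, hj]
  · simp

lemma sum_mul_dot2 {m : ℕ} {ι : Type} [Fintype ι] (y : ι → ZMod 2) (α : Fin m → ZMod 2)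
    (v : ι → Fin m → ZMod 2) :
    ∑ d, y d * dot2 α (v d) = dot2 α (fun i => ∑ d, y d * v d i) := by
  simp only [dot2, Finset.mul_sum]
  rw [Finset.sum_comm]
  apply Finset.sum_congr rfl
  intro i _
  apply Finset.sum_congr rfl
  intro d _
  ring

-- the hom
def Tmap {m : ℕ} (D : Finset (Fin m → F)) (π₁ π₂ : F → ZMod 2) :
    ({d // d ∈ D} → ZMod 2) →+ (Fin m → ZMod 2) × (Fin m → ZMod 2) where
  toFun y := (fun i => ∑ d, y d * π₁ (d.1 i), fun i => ∑ d, y d * π₂ (d.1 i))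
  map_zero' := by
    refine Prod.ext ?_ ?_ <;> funext i <;> simp
  map_add' y z := by
    refine Prod.ext ?_ ?_ <;> funext i <;>
      simp [add_mul, Finset.sum_add_distrib]

def deltaSub {m : ℕ} (S : Finset (Fin m)) : AddSubgroup (Fin m → ZMod 2) where
  carrier := ↑(delta S)
  zero_mem' := by
    simp only [Finset.mem_coe]
    exact mem_delta.mpr fun i _ => rfl
  add_mem' := by
    intro x y hx hy
    simp only [Finset.mem_coe, mem_delta] at *
    intro i hi
    simp [hx i hi, hy i hi]
  neg_mem' := by
    intro x hx
    simp only [Finset.mem_coe, mem_delta] at *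
    intro i hi
    simp [hx i hi]

lemma mem_deltaSub {m : ℕ} {S : Finset (Fin m)} {v : Fin m → ZMod 2} :
    v ∈ deltaSub S ↔ ∀ i ∉ S, v i = 0 := by
  change v ∈ (delta S : Set _) ↔ _
  rw [Finset.mem_coe, mem_delta]

lemma card_deltaSub {m : ℕ} (S : Finset (Fin m)) :
    Nat.card (deltaSub S) = 2 ^ S.card := by
  have h1 : Nat.card (deltaSub S) = Nat.card {v // v ∈ delta S} := by
    apply Nat.card_congr
    exact Equiv.subtypeEquivRight (by intro v; exact mem_deltaSub.trans mem_delta.symm)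
  rw [h1, Nat.card_eq_fintype_card, Fintype.card_coe, card_delta]

end Aux

set_option maxHeartbeats 2000000 in
/-- Theorem 5.5: the dual of the binary subfield code `C^{(2)}_{D^*}` (for `D = Δ + wΔ`,
`Δ = Δ_A ∪ Δ_B`, `A ⊄ B`, `B ⊄ A`, `n = N² − 1`) has dimension `n − 2|A∪B|` and minimum
distance exactly `3`; moreover `1 + n + n(n−1)/2 > 4^{|A∪B|}`, so by the Sphere Packing
bound no binary linear code of length `n`, dimension `n − 2|A∪B|` and minimum distance `5`
exists. -/
theorem binary_subfield_dual_almost_optimal {m : ℕ} (hm : 1 ≤ m)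
    (hF : Fintype.card F = 4) (w : F) (hw : w ^ 2 + w + 1 = 0)
    (π₁ π₂ : F → ZMod 2) (hπ : ∀ g : F, g = e2 (π₁ g) + w * e2 (π₂ g))
    (A B : Finset (Fin m)) (hA : ¬ A ⊆ B) (hB : ¬ B ⊆ A)
    (a b c u n : ℕ) (ha : a = A.card) (hb : b = B.card) (hc : c = (A ∩ B).card)
    (hu : u = (A ∪ B).card) (hn : n = (2 ^ a + 2 ^ b - 2 ^ c) ^ 2 - 1) :
    ((((delta A ∪ delta B) ×ˢ (delta A ∪ delta B)).image (dvec w)).erase 0).card = n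
    ∧ Set.ncard {y : {d // d ∈ (((delta A ∪ delta B) ×ˢ (delta A ∪ delta B)).image
          (dvec w)).erase 0} → ZMod 2 |
        ∀ α β : Fin m → ZMod 2,
          ∑ d, y d * cw2F ((((delta A ∪ delta B) ×ˢ (delta A ∪ delta B)).image
            (dvec w)).erase 0) π₁ π₂ α β d = 0}
      = 2 ^ (n - 2 * u)
    ∧ (∀ y : {d // d ∈ (((delta A ∪ delta B) ×ˢ (delta A ∪ delta B)).image
          (dvec w)).erase 0} → ZMod 2,
        (∀ α β : Fin m → ZMod 2,
          ∑ d, y d * cw2F ((((delta A ∪ delta B) ×ˢ (delta A ∪ delta B)).image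
            (dvec w)).erase 0) π₁ π₂ α β d = 0) →
        y ≠ 0 → 3 ≤ (Finset.univ.filter (fun d => y d ≠ 0)).card)
    ∧ (∃ y : {d // d ∈ (((delta A ∪ delta B) ×ˢ (delta A ∪ delta B)).image
          (dvec w)).erase 0} → ZMod 2,
        (∀ α β : Fin m → ZMod 2,
          ∑ d, y d * cw2F ((((delta A ∪ delta B) ×ˢ (delta A ∪ delta B)).image
            (dvec w)).erase 0) π₁ π₂ α β d = 0)
        ∧ y ≠ 0 ∧ (Finset.univ.filter (fun d => y d ≠ 0)).card = 3)
    ∧ 4 ^ u < 1 + n + n * (n - 1) / 2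
    ∧ ¬ ∃ C : Submodule (ZMod 2) (Fin n → ZMod 2),
        Nat.card C = 2 ^ (n - 2 * u)
        ∧ (∀ y ∈ C, y ≠ 0 → 5 ≤ (Finset.univ.filter (fun i => y i ≠ 0)).card)
        ∧ (∃ y ∈ C, y ≠ 0 ∧ (Finset.univ.filter (fun i => y i ≠ 0)).card = 5) := by
  classical
  set Dl : Finset (Fin m → ZMod 2) := delta A ∪ delta B with hDl
  set DD : Finset (Fin m → F) := ((Dl ×ˢ Dl).image (dvec w)).erase 0 with hDD
  -- basic facts
  have hinj : Function.Injective (dvec w : _ → Fin m → F) := dvec_inj hF w hw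
  have hpi : ∀ x y : ZMod 2, π₁ ((e2 x : F) + w * e2 y) = x ∧ π₂ ((e2 x : F) + w * e2 y) = y := by
    intro x y
    have h := uniq_rep hF w hw x y (π₁ ((e2 x : F) + w * e2 y)) (π₂ ((e2 x : F) + w * e2 y))
      (hπ ((e2 x : F) + w * e2 y))
    exact ⟨h.1.symm, h.2.symm⟩
  have hdvec0 : dvec w ((0 : Fin m → ZMod 2), (0 : Fin m → ZMod 2)) = 0 := by
    funext i; simp [dvec, e2_zero]
  have h0Dl : (0 : Fin m → ZMod 2) ∈ Dl := by
    rw [hDl]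
    exact Finset.mem_union_left _ (mem_delta.mpr fun i _ => rfl)
  have hmemDD : ∀ p : (Fin m → ZMod 2) × (Fin m → ZMod 2),
      p.1 ∈ Dl → p.2 ∈ Dl → p ≠ 0 → dvec w p ∈ DD := by
    intro p h1 h2 hp0
    rw [hDD, Finset.mem_erase]
    constructor
    · intro h0
      apply hp0
      have : dvec w p = dvec w 0 := by rw [h0, ← hdvec0]; rfl
      exact hinj this
    · exact Finset.mem_image.mpr ⟨p, Finset.mem_product.mpr ⟨h1, h2⟩, rfl⟩
  have hdec : ∀ d : Fin m → F, d ∈ DD →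
      ∃ p : (Fin m → ZMod 2) × (Fin m → ZMod 2), p.1 ∈ Dl ∧ p.2 ∈ Dl ∧ p ≠ 0 ∧
        d = dvec w p ∧ (∀ i, π₁ (d i) = p.1 i) ∧ (∀ i, π₂ (d i) = p.2 i) := by
    intro d hd
    rw [hDD, Finset.mem_erase] at hd
    obtain ⟨hd0, hdi⟩ := hd
    obtain ⟨p, hp, rfl⟩ := Finset.mem_image.mp hdi
    rw [Finset.mem_product] at hp
    refine ⟨p, hp.1, hp.2, ?_, rfl, ?_, ?_⟩
    · intro h0; apply hd0; rw [h0]; exact hdvec0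
    · intro i; exact (hpi (p.1 i) (p.2 i)).1
    · intro i; exact (hpi (p.1 i) (p.2 i)).2
  -- cardinality facts
  have hca : c < a := by
    rw [ha, hc]
    apply Finset.card_lt_card
    rw [Finset.ssubset_iff_of_subset (Finset.inter_subset_left)]
    obtain ⟨i0, hi0A, hi0B⟩ := Finset.not_subset.mp hA
    exact ⟨i0, hi0A, fun hmem => hi0B (Finset.mem_inter.mp hmem).2⟩
  have hcb : c < b := by
    rw [hb, hc]
    apply Finset.card_lt_card
    rw [Finset.ssubset_iff_of_subset (Finset.inter_subset_right)]
    obtain ⟨j0, hj0B, hj0A⟩ := Finset.not_subset.mp hB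
    exact ⟨j0, hj0B, fun hmem => hj0A (Finset.mem_inter.mp hmem).1⟩
  have huc : u + c = a + b := by
    rw [hu, hc, ha, hb]
    exact Finset.card_union_add_card_inter A B
  have hDlcard : Dl.card = 2 ^ a + 2 ^ b - 2 ^ c := by
    have h := card_delta_union A B
    rw [← ha, ← hb, ← hc] at h
    rw [hDl]
    omega
  have hcard1 : DD.card = n := by
    rw [hDD, Finset.card_erase_of_mem, Finset.card_image_of_injective _ hinj,
      Finset.card_product, hDlcard, hn]
    · rw [← pow_two]
    · exact Finset.mem_image.mpr ⟨(0, 0), Finset.mem_product.mpr ⟨h0Dl, h0Dl⟩, hdvec0⟩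
  have hn1 : n + 1 = (2 ^ a + 2 ^ b - 2 ^ c) ^ 2 := by
    have h1 : 2 ^ c ≤ 2 ^ b := Nat.pow_le_pow_right (by norm_num) (by omega)
    have h2 : 1 ≤ 2 ^ a := Nat.one_le_two_pow
    have h3 : 1 ≤ 2 ^ a + 2 ^ b - 2 ^ c := by omega
    have h4 : 1 ≤ (2 ^ a + 2 ^ b - 2 ^ c) ^ 2 := Nat.one_le_pow _ _ (by omega)
    omega
  obtain ⟨h2un, hhlt⟩ := arith_key a b c u n hca hcb huc hn1
  -- the dual condition
  have hcond : ∀ y : {d // d ∈ DD} → ZMod 2,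
      (∀ α β : Fin m → ZMod 2, ∑ d, y d * cw2F DD π₁ π₂ α β d = 0) ↔
      ((∀ i, ∑ d : {d // d ∈ DD}, y d * π₁ (d.1 i) = 0) ∧
        (∀ i, ∑ d : {d // d ∈ DD}, y d * π₂ (d.1 i) = 0)) := by
    intro y
    have expand : ∀ α β : Fin m → ZMod 2, ∑ d, y d * cw2F DD π₁ π₂ α β d
        = dot2 α (fun i => ∑ d : {d // d ∈ DD}, y d * π₂ (d.1 i))
          + dot2 β (fun i => (∑ d : {d // d ∈ DD}, y d * π₁ (d.1 i))
            + ∑ d : {d // d ∈ DD}, y d * π₂ (d.1 i)) := by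
      intro α β
      have e1 : ∑ d, y d * cw2F DD π₁ π₂ α β d
          = (∑ d : {d // d ∈ DD}, y d * dot2 α (fun i => π₂ (d.1 i)))
            + ∑ d : {d // d ∈ DD}, y d * dot2 β (fun i => π₁ (d.1 i) + π₂ (d.1 i)) := by
        simp only [cw2F, mul_add, Finset.sum_add_distrib]
      rw [e1, sum_mul_dot2, sum_mul_dot2]
      congr 2
      funext i
      simp [mul_add, Finset.sum_add_distrib]
    constructor
    · intro h
      have h2 : ∀ i, ∑ d : {d // d ∈ DD}, y d * π₂ (d.1 i) = 0 := by
        intro i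
        have h3 := h (Pi.single i 1) 0
        rw [expand, dot2_single] at h3
        simpa [dot2] using h3
      refine ⟨?_, h2⟩
      intro i
      have h3 := h 0 (Pi.single i 1)
      rw [expand, dot2_single] at h3
      simp only [dot2] at h3
      simp only [Pi.zero_apply, zero_mul, Finset.sum_const_zero, zero_add, h2 i, add_zero] at h3
      exact h3
    · rintro ⟨h1, h2⟩ α β
      rw [expand]
      have e1 : (fun i => ∑ d : {d // d ∈ DD}, y d * π₂ (d.1 i)) = fun _ => (0 : ZMod 2) := by
        funext i; exact h2 i
      have e2 : (fun i => (∑ d : {d // d ∈ DD}, y d * π₁ (d.1 i))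
          + ∑ d : {d // d ∈ DD}, y d * π₂ (d.1 i)) = fun _ => (0 : ZMod 2) := by
        funext i; rw [h1 i, h2 i, add_zero]
      rw [e1, e2]
      simp [dot2]
  -- part 2
  have hpart2 : Set.ncard {y : {d // d ∈ DD} → ZMod 2 |
      ∀ α β : Fin m → ZMod 2, ∑ d, y d * cw2F DD π₁ π₂ α β d = 0} = 2 ^ (n - 2 * u) := by
    have hsingleDl : ∀ i ∈ A ∪ B, (Pi.single i 1 : Fin m → ZMod 2) ∈ Dl := by
      intro i hi
      rw [hDl]
      rcases Finset.mem_union.mp hi with hiA | hiB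
      · exact Finset.mem_union_left _ (mem_delta.mpr fun j hj =>
          Pi.single_eq_of_ne (by rintro rfl; exact hj hiA) 1)
      · exact Finset.mem_union_right _ (mem_delta.mpr fun j hj =>
          Pi.single_eq_of_ne (by rintro rfl; exact hj hiB) 1)
    have hsingle0 : ∀ i : Fin m, (Pi.single i 1 : Fin m → ZMod 2) ≠ 0 := by
      intro i h
      have h1 := congrFun h i
      simp at h1
    set T := Tmap (F := F) DD π₁ π₂ with hT
    have hker_set : {y : {d // d ∈ DD} → ZMod 2 |
        ∀ α β : Fin m → ZMod 2, ∑ d, y d * cw2F DD π₁ π₂ α β d = 0}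
        = (T.ker : Set ({d // d ∈ DD} → ZMod 2)) := by
      ext y
      simp only [Set.mem_setOf_eq, SetLike.mem_coe, AddMonoidHom.mem_ker]
      rw [hcond y]
      constructor
      · rintro ⟨h1, h2⟩
        refine Prod.ext ?_ ?_
        · funext i; exact h1 i
        · funext i; exact h2 i
      · intro h
        constructor
        · intro i; exact congrFun (congrArg Prod.fst h) i
        · intro i; exact congrFun (congrArg Prod.snd h) i
    set P := deltaSub (A ∪ B) with hP
    have hcollapse : ∀ (d0 : Fin m → F), d0 ∈ DD → ∀ (co : ZMod 2) (f : (Fin m → F) → ZMod 2),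
        ∑ d : {d // d ∈ DD}, (if d.1 = d0 then co else 0) * f d.1 = co * f d0 := by
      intro d0 h0 co f
      rw [Finset.sum_eq_single (⟨d0, h0⟩ : {d // d ∈ DD})]
      · simp
      · intro d _ hd
        have hne : d.1 ≠ d0 := fun h => hd (Subtype.ext h)
        simp [hne]
      · simp
    have hrange : T.range = P.prod P := by
      apply le_antisymm
      · intro v hv
        obtain ⟨y, rfl⟩ := AddMonoidHom.mem_range.mp hv
        rw [AddSubgroup.mem_prod]
        constructor
        · rw [hP, mem_deltaSub]
          intro i hi
          show ∑ d : {d // d ∈ DD}, y d * π₁ (d.1 i) = 0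
          apply Finset.sum_eq_zero
          intro d _
          obtain ⟨p, hp1, hp2, -, -, hpi1, -⟩ := hdec d.1 d.2
          rw [hpi1 i, hDl] at *
          rcases Finset.mem_union.mp hp1 with h | h
          · rw [mem_delta.mp h i (fun hiA => hi (Finset.mem_union_left _ hiA)), mul_zero]
          · rw [mem_delta.mp h i (fun hiB => hi (Finset.mem_union_right _ hiB)), mul_zero]
        · rw [hP, mem_deltaSub]
          intro i hi
          show ∑ d : {d // d ∈ DD}, y d * π₂ (d.1 i) = 0
          apply Finset.sum_eq_zero
          intro d _
          obtain ⟨p, hp1, hp2, -, -, -, hpi2⟩ := hdec d.1 d.2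
          rw [hpi2 i, hDl] at *
          rcases Finset.mem_union.mp hp2 with h | h
          · rw [mem_delta.mp h i (fun hiA => hi (Finset.mem_union_left _ hiA)), mul_zero]
          · rw [mem_delta.mp h i (fun hiB => hi (Finset.mem_union_right _ hiB)), mul_zero]
      · rintro ⟨v1, v2⟩ hv
        rw [AddSubgroup.mem_prod] at hv
        obtain ⟨hv1, hv2⟩ := hv
        rw [hP, mem_deltaSub] at hv1 hv2
        refine AddMonoidHom.mem_range.mpr ⟨fun d => ∑ i ∈ A ∪ B,
          ((if d.1 = dvec w (Pi.single i 1, (0:Fin m → ZMod 2)) then v1 i else 0)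
            + (if d.1 = dvec w ((0:Fin m → ZMod 2), Pi.single i 1) then v2 i else 0)), ?_⟩
        have hmem1 : ∀ i ∈ A ∪ B, dvec w (Pi.single i 1, (0:Fin m → ZMod 2)) ∈ DD :=
          fun i hi => hmemDD _ (hsingleDl i hi) h0Dl
            (fun h => hsingle0 i (congrArg Prod.fst h))
        have hmem2 : ∀ i ∈ A ∪ B, dvec w ((0:Fin m → ZMod 2), Pi.single i 1) ∈ DD :=
          fun i hi => hmemDD _ h0Dl (hsingleDl i hi)
            (fun h => hsingle0 i (congrArg Prod.snd h))
        have hpoint : ∀ (j : Fin m) (φ : F → ZMod 2),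
            ∑ d : {d // d ∈ DD}, (∑ i ∈ A ∪ B,
              ((if d.1 = dvec w (Pi.single i 1, (0:Fin m → ZMod 2)) then v1 i else 0)
                + (if d.1 = dvec w ((0:Fin m → ZMod 2), Pi.single i 1) then v2 i else 0)))
                * φ (d.1 j)
            = ∑ i ∈ A ∪ B, (v1 i * φ (dvec w (Pi.single i 1, (0:Fin m → ZMod 2)) j)
                + v2 i * φ (dvec w ((0:Fin m → ZMod 2), Pi.single i 1) j)) := by
          intro j φ
          simp only [Finset.sum_mul, add_mul]
          rw [Finset.sum_comm]
          apply Finset.sum_congr rfl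
          intro i hi
          rw [Finset.sum_add_distrib]
          congr 1
          · exact hcollapse _ (hmem1 i hi) (v1 i) (fun d => φ (d j))
          · exact hcollapse _ (hmem2 i hi) (v2 i) (fun d => φ (d j))
        refine Prod.ext ?_ ?_
        · funext j
          show (∑ d : {d // d ∈ DD}, (∑ i ∈ A ∪ B,
              ((if d.1 = dvec w (Pi.single i 1, (0:Fin m → ZMod 2)) then v1 i else 0)
                + (if d.1 = dvec w ((0:Fin m → ZMod 2), Pi.single i 1) then v2 i else 0)))
                * π₁ (d.1 j)) = v1 j
          rw [hpoint j π₁]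
          have e1 : ∀ i, π₁ (dvec w (Pi.single i 1, (0:Fin m → ZMod 2)) j)
              = (Pi.single i 1 : Fin m → ZMod 2) j :=
            fun i => (hpi ((Pi.single i 1 : Fin m → ZMod 2) j) 0).1
          have e2 : ∀ i, π₁ (dvec w ((0:Fin m → ZMod 2), Pi.single i 1) j) = 0 :=
            fun i => (hpi 0 ((Pi.single i 1 : Fin m → ZMod 2) j)).1
          calc ∑ i ∈ A ∪ B, (v1 i * π₁ (dvec w (Pi.single i 1, (0:Fin m → ZMod 2)) j)
                + v2 i * π₁ (dvec w ((0:Fin m → ZMod 2), Pi.single i 1) j))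
              = ∑ i ∈ A ∪ B, (if j = i then v1 i else 0) := by
                apply Finset.sum_congr rfl
                intro i _
                rw [e1 i, e2 i, mul_zero, add_zero, Pi.single_apply]
                simp [mul_ite]
            _ = v1 j := by
                rw [Finset.sum_ite_eq]
                by_cases hj : j ∈ A ∪ B
                · simp [hj]
                · rw [if_neg hj]; exact (hv1 j hj).symm
        · funext j
          show (∑ d : {d // d ∈ DD}, (∑ i ∈ A ∪ B,
              ((if d.1 = dvec w (Pi.single i 1, (0:Fin m → ZMod 2)) then v1 i else 0)
                + (if d.1 = dvec w ((0:Fin m → ZMod 2), Pi.single i 1) then v2 i else 0)))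
                * π₂ (d.1 j)) = v2 j
          rw [hpoint j π₂]
          have e1 : ∀ i, π₂ (dvec w (Pi.single i 1, (0:Fin m → ZMod 2)) j) = 0 :=
            fun i => (hpi ((Pi.single i 1 : Fin m → ZMod 2) j) 0).2
          have e2 : ∀ i, π₂ (dvec w ((0:Fin m → ZMod 2), Pi.single i 1) j)
              = (Pi.single i 1 : Fin m → ZMod 2) j :=
            fun i => (hpi 0 ((Pi.single i 1 : Fin m → ZMod 2) j)).2
          calc ∑ i ∈ A ∪ B, (v1 i * π₂ (dvec w (Pi.single i 1, (0:Fin m → ZMod 2)) j)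
                + v2 i * π₂ (dvec w ((0:Fin m → ZMod 2), Pi.single i 1) j))
              = ∑ i ∈ A ∪ B, (if j = i then v2 i else 0) := by
                apply Finset.sum_congr rfl
                intro i _
                rw [e1 i, e2 i, mul_zero, zero_add, Pi.single_apply]
                simp [mul_ite]
            _ = v2 j := by
                rw [Finset.sum_ite_eq]
                by_cases hj : j ∈ A ∪ B
                · simp [hj]
                · rw [if_neg hj]; exact (hv2 j hj).symm
    -- cardinalities
    have hcardDom : Nat.card ({d // d ∈ DD} → ZMod 2) = 2 ^ n := by
      rw [Nat.card_eq_fintype_card, Fintype.card_fun, ZMod.card, Fintype.card_coe, hcard1]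
    have hcardRange : Nat.card T.range = 4 ^ u := by
      rw [hrange]
      have h1 : Nat.card (P.prod P) = Nat.card P * Nat.card P := by
        rw [← Nat.card_prod]
        exact Nat.card_congr (AddSubgroup.prodEquiv P P).toEquiv
      rw [h1, hP, card_deltaSub, ← hu]
      rw [show (4:ℕ) = 2 * 2 from rfl, Nat.mul_pow]
    have hcardEq : Nat.card ({d // d ∈ DD} → ZMod 2)
        = Nat.card (({d // d ∈ DD} → ZMod 2) ⧸ T.ker) * Nat.card T.ker :=
      AddSubgroup.card_eq_card_quotient_mul_card_addSubgroup T.ker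
    have hquot : Nat.card (({d // d ∈ DD} → ZMod 2) ⧸ T.ker) = Nat.card T.range :=
      Nat.card_congr (QuotientAddGroup.quotientKerEquivRange T).toEquiv
    have hfinal : 2 ^ n = 4 ^ u * Nat.card T.ker := by
      rw [← hcardDom, hcardEq, hquot, hcardRange]
    have hpow : (4:ℕ) ^ u * 2 ^ (n - 2 * u) = 2 ^ n := by
      rw [show (4:ℕ) = 2 ^ 2 from rfl, ← pow_mul, ← pow_add]
      congr 1
      omega
    have hmul : 4 ^ u * Nat.card T.ker = 4 ^ u * 2 ^ (n - 2 * u) := by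
      rw [← hfinal, hpow]
    have hker_card : Nat.card T.ker = 2 ^ (n - 2 * u) :=
      Nat.eq_of_mul_eq_mul_left (show 0 < 4 ^ u by positivity) hmul
    rw [hker_set, ← Nat.card_coe_set_eq, SetLike.coe_sort_coe]
    exact hker_card
  -- part 3
  have hpart3 : ∀ y : {d // d ∈ DD} → ZMod 2,
      (∀ α β : Fin m → ZMod 2, ∑ d, y d * cw2F DD π₁ π₂ α β d = 0) →
      y ≠ 0 → 3 ≤ (Finset.univ.filter (fun d => y d ≠ 0)).card := by
    intro y hdual hy0
    obtain ⟨hs1, hs2⟩ := (hcond y).mp hdual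
    set s : Finset {d // d ∈ DD} := Finset.univ.filter (fun d => y d ≠ 0) with hs
    -- rewrite sums over the support
    have hsupp : ∀ f : {d // d ∈ DD} → ZMod 2,
        ∑ d : {d // d ∈ DD}, y d * f d = ∑ d ∈ s, f d := by
      intro f
      rw [hs, ← Finset.sum_filter_of_ne (s := Finset.univ) (p := fun d => y d ≠ 0)
        (f := fun d => y d * f d)]
      · apply Finset.sum_congr rfl
        intro d hd
        rw [Finset.mem_filter] at hd
        rcases zmod2_cases (y d) with h0 | h1
        · exact absurd h0 hd.2
        · rw [h1, one_mul]
      · intro d _ hne h0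
        apply hne
        rw [h0, zero_mul]
    -- equal pi implies equal element
    have heqd : ∀ d d' : {d // d ∈ DD}, (∀ i, π₁ (d.1 i) = π₁ (d'.1 i)) →
        (∀ i, π₂ (d.1 i) = π₂ (d'.1 i)) → d = d' := by
      intro d d' hp1 hp2
      apply Subtype.ext
      funext i
      rw [hπ (d.1 i), hπ (d'.1 i), hp1 i, hp2 i]
    have hne0 : ∀ d : {d // d ∈ DD}, ¬ ((∀ i, π₁ (d.1 i) = 0) ∧ (∀ i, π₂ (d.1 i) = 0)) := by
      rintro d ⟨hp1, hp2⟩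
      have hd : d.1 ≠ 0 ∧ d.1 ∈ (Dl ×ˢ Dl).image (dvec w) := Finset.mem_erase.mp d.2
      apply hd.1
      funext i
      rw [hπ (d.1 i), hp1 i, hp2 i, e2_zero, mul_zero, add_zero]
      rfl
    have hsne : s.Nonempty := by
      obtain ⟨d, hd⟩ := Function.ne_iff.mp hy0
      exact ⟨d, Finset.mem_filter.mpr ⟨Finset.mem_univ _, by simpa using hd⟩⟩
    by_contra hlt
    push_neg at hlt
    have hc1 : 1 ≤ s.card := Finset.card_pos.mpr hsne
    interval_cases hsc : s.card
    · -- card 1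
      obtain ⟨d0, hd0⟩ := Finset.card_eq_one.mp hsc
      apply hne0 d0
      constructor
      · intro i
        have := hs1 i
        rw [hsupp, hd0, Finset.sum_singleton] at this
        exact this
      · intro i
        have := hs2 i
        rw [hsupp, hd0, Finset.sum_singleton] at this
        exact this
    · -- card 2
      obtain ⟨d0, d1, hne, hd01⟩ := Finset.card_eq_two.mp hsc
      apply hne
      apply heqd
      · intro i
        have := hs1 i
        rw [hsupp, hd01, Finset.sum_insert (by simp [hne]), Finset.sum_singleton] at this
        exact zmod2_add_self_eq_zero _ _ this
      · intro i
        have := hs2 i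
        rw [hsupp, hd01, Finset.sum_insert (by simp [hne]), Finset.sum_singleton] at this
        exact zmod2_add_self_eq_zero _ _ this
  -- part 4
  have hpart4 : ∃ y : {d // d ∈ DD} → ZMod 2,
      (∀ α β : Fin m → ZMod 2, ∑ d, y d * cw2F DD π₁ π₂ α β d = 0)
      ∧ y ≠ 0 ∧ (Finset.univ.filter (fun d => y d ≠ 0)).card = 3 := by
    obtain ⟨i0, hi0A, hi0B⟩ := Finset.not_subset.mp hA
    set g : Fin m → ZMod 2 := Pi.single i0 1 with hg
    have hgDl : g ∈ Dl := by
      rw [hDl]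
      refine Finset.mem_union_left _ (mem_delta.mpr fun j hj => ?_)
      exact Pi.single_eq_of_ne (by rintro rfl; exact hj hi0A) 1
    have hg0 : g ≠ 0 := by
      intro h
      have h1 := congrFun h i0
      rw [hg] at h1
      simp at h1
    have hda : dvec w (g, (0:Fin m → ZMod 2)) ∈ DD :=
      hmemDD _ hgDl h0Dl (by intro h; exact hg0 (congrArg Prod.fst h))
    have hdb : dvec w ((0:Fin m → ZMod 2), g) ∈ DD :=
      hmemDD _ h0Dl hgDl (by intro h; exact hg0 (congrArg Prod.snd h))
    have hdc : dvec w (g, g) ∈ DD :=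
      hmemDD _ hgDl hgDl (by intro h; exact hg0 (congrArg Prod.fst h))
    set xa : {d // d ∈ DD} := ⟨dvec w (g, (0:Fin m → ZMod 2)), hda⟩ with hxa
    set xb : {d // d ∈ DD} := ⟨dvec w ((0:Fin m → ZMod 2), g), hdb⟩ with hxb
    set xc : {d // d ∈ DD} := ⟨dvec w (g, g), hdc⟩ with hxc
    have hab : xa ≠ xb := by
      intro h
      have h1 := hinj (congrArg Subtype.val h)
      exact hg0 (congrArg Prod.fst h1)
    have hac : xa ≠ xc := by
      intro h
      have h1 := hinj (congrArg Subtype.val h)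
      exact hg0 ((congrArg Prod.snd h1).symm)
    have hbc : xb ≠ xc := by
      intro h
      have h1 := hinj (congrArg Subtype.val h)
      exact hg0 ((congrArg Prod.fst h1).symm)
    refine ⟨fun d => if d = xa ∨ d = xb ∨ d = xc then 1 else 0, ?_, ?_, ?_⟩
    · -- dual condition
      set y : {d // d ∈ DD} → ZMod 2 := fun d => if d = xa ∨ d = xb ∨ d = xc then 1 else 0 with hy
      have hsum3 : ∀ f : {d // d ∈ DD} → ZMod 2,
          ∑ d : {d // d ∈ DD}, y d * f d = f xa + (f xb + f xc) := by
        intro f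
        have h1 : ∀ d : {d // d ∈ DD}, y d * f d
            = if d ∈ ({xa, xb, xc} : Finset {d // d ∈ DD}) then f d else 0 := by
          intro d
          by_cases hd : d = xa ∨ d = xb ∨ d = xc
          · simp [hy, hd, Finset.mem_insert, Finset.mem_singleton]
          · simp only [Finset.mem_insert, Finset.mem_singleton]
            simp [hy, hd]
        rw [Finset.sum_congr rfl (fun d _ => h1 d), Finset.sum_ite_mem, Finset.univ_inter,
          Finset.sum_insert (by simp [hab, hac]), Finset.sum_insert (by simp [hbc]),
          Finset.sum_singleton]
      have hpa1 : ∀ i, π₁ (xa.1 i) = g i := fun i => (hpi (g i) 0).1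
      have hpa2 : ∀ i, π₂ (xa.1 i) = 0 := fun i => (hpi (g i) 0).2
      have hpb1 : ∀ i, π₁ (xb.1 i) = 0 := fun i => (hpi 0 (g i)).1
      have hpb2 : ∀ i, π₂ (xb.1 i) = g i := fun i => (hpi 0 (g i)).2
      have hpc1 : ∀ i, π₁ (xc.1 i) = g i := fun i => (hpi (g i) (g i)).1
      have hpc2 : ∀ i, π₂ (xc.1 i) = g i := fun i => (hpi (g i) (g i)).2
      have hz : ∀ x : ZMod 2, x + (0 + x) = 0 := by decide
      have hz' : ∀ x : ZMod 2, 0 + (x + x) = 0 := by decide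
      refine (hcond y).mpr ⟨?_, ?_⟩
      · intro i
        rw [hsum3, hpa1, hpb1, hpc1]
        exact hz (g i)
      · intro i
        rw [hsum3, hpa2, hpb2, hpc2]
        exact hz' (g i)
    · -- nonzero
      intro h
      have h1 := congrFun h xa
      simp at h1
    · -- weight 3
      have hsupp4 : (Finset.univ.filter
          (fun d => (if d = xa ∨ d = xb ∨ d = xc then (1:ZMod 2) else 0) ≠ 0))
          = ({xa, xb, xc} : Finset {d // d ∈ DD}) := by
        ext d
        simp only [Finset.mem_filter, Finset.mem_univ, true_and, Finset.mem_insert,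
          Finset.mem_singleton]
        by_cases hd : d = xa ∨ d = xb ∨ d = xc
        · simp [hd]
        · simp [hd]
      rw [hsupp4, Finset.card_insert_of_notMem (by simp [hab, hac]),
        Finset.card_insert_of_notMem (by simp [hbc]), Finset.card_singleton]
  exact ⟨hcard1, hpart2, hpart3, hpart4, hhlt, sphere_packing n u h2un hhlt⟩
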